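/- arXiv:1811.01652 — 2 statements merged into one kernel-verified Lean document; each statement's English description precedes it below -/
import Mathlib

section
/- Let n ≥ 2 be an integer and let k ≥ n be an integer. Let ℓ_k^∞ denote ℝ^k equipped with the supremum norm ‖(t_1,…,t_k)‖ = max_{1 ≤ i ≤ k} |t_i|. Then C̲_NJ^{(n)}(ℓ_k^∞) = C̲_mNJ^{(n)}(ℓ_k^∞) = 1/n. The same equalities hold for the infinite-dimensional space ℓ^∞ of bounded real sequences. -/
open Finset MeasureTheory

noncomputable def njRatio {X : Type*} [NormedAddCommGroup X] [NormedSpace ℝ X]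
    {m : ℕ} (x0 : X) (y : Fin m → X) : ℝ :=
  (∑ ε : Fin m → Bool, ‖x0 + ∑ j, (if ε j then (1 : ℝ) else -1) • y j‖ ^ 2) /
    (2 ^ m * (‖x0‖ ^ 2 + ∑ j, ‖y j‖ ^ 2))

noncomputable def upperNJ (X : Type*) [NormedAddCommGroup X] [NormedSpace ℝ X] (n : ℕ) : ℝ :=
  sSup {c : ℝ | ∃ (x0 : X) (y : Fin (n - 1) → X),
    0 < ‖x0‖ ^ 2 + ∑ j, ‖y j‖ ^ 2 ∧ c = njRatio x0 y}

noncomputable def lowerNJ (X : Type*) [NormedAddCommGroup X] [NormedSpace ℝ X] (n : ℕ) : ℝ :=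
  sInf {c : ℝ | ∃ (x0 : X) (y : Fin (n - 1) → X),
    0 < ‖x0‖ ^ 2 + ∑ j, ‖y j‖ ^ 2 ∧ c = njRatio x0 y}

noncomputable def upperMNJ (X : Type*) [NormedAddCommGroup X] [NormedSpace ℝ X] (n : ℕ) : ℝ :=
  sSup {c : ℝ | ∃ (x0 : X) (y : Fin (n - 1) → X),
    ‖x0‖ = 1 ∧ (∀ j, ‖y j‖ = 1) ∧ c = njRatio x0 y}

noncomputable def lowerMNJ (X : Type*) [NormedAddCommGroup X] [NormedSpace ℝ X] (n : ℕ) : ℝ :=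
  sInf {c : ℝ | ∃ (x0 : X) (y : Fin (n - 1) → X),
    ‖x0‖ = 1 ∧ (∀ j, ‖y j‖ = 1) ∧ c = njRatio x0 y}

/-! Pairing each sign pattern `ε` with its total flip gives
`2‖x₀‖ = ‖u_ε + u_{-ε}‖ ≤ ‖u_ε‖ + ‖u_{-ε}‖` for the signed sums `u_ε = x₀ + ∑ ε_j y_j`, and pairing
it with the flip of the `j`-th sign gives `2‖y_j‖ ≤ ‖u_ε‖ + ‖u_{ε'}‖`. Squaring and summing over
all `2^{n-1}` patterns, each of the `n` vectors has `2^{n-1}‖x‖² ≤ ∑_ε ‖u_ε‖²`, so the ratio is at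
least `1/n` in every normed space. In `ℓ^∞` the unit vectors `e₀, …, e_{n-1}` make every signed sum
a `±1` vector of norm `1`, so `1/n` is attained, with unit vectors. -/

open Function

section SignedSums

variable {X : Type*} [NormedAddCommGroup X] [NormedSpace ℝ X] {m : ℕ}

def signedSum (x0 : X) (y : Fin m → X) (ε : Fin m → Bool) : X :=
  x0 + ∑ j, (if ε j then (1 : ℝ) else -1) • y j

lemma njRatio_eq_sum_signedSum (x0 : X) (y : Fin m → X) :
    njRatio x0 y = (∑ ε, ‖signedSum x0 y ε‖ ^ 2) / (2 ^ m * (‖x0‖ ^ 2 + ∑ j, ‖y j‖ ^ 2)) :=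
  rfl

lemma signedSum_add_signedSum_not (x0 : X) (y : Fin m → X) (ε : Fin m → Bool) :
    signedSum x0 y ε + signedSum x0 y (fun j => !ε j) = (2 : ℝ) • x0 := by
  have hneg : ∑ j, (if !ε j then (1 : ℝ) else -1) • y j
      = -∑ j, (if ε j then (1 : ℝ) else -1) • y j := by
    rw [← sum_neg_distrib]
    exact sum_congr rfl fun j _ => by cases ε j <;> simp
  rw [signedSum, signedSum, hneg]
  module

lemma signedSum_sub_signedSum_update (x0 : X) (y : Fin m → X) (ε : Fin m → Bool) (j : Fin m) :
    signedSum x0 y ε - signedSum x0 y (update ε j (!ε j))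
      = (if ε j then (2 : ℝ) else -2) • y j := by
  simp only [signedSum, add_sub_add_left_eq_sub, ← sum_sub_distrib, ← sub_smul]
  rw [Fintype.sum_eq_single j fun i hi => by simp [update_of_ne hi]]
  cases ε j <;> norm_num

lemma card_mul_sq_le_sum_sq_of_le_add_perm {ι : Type*} [Fintype ι] {f : ι → ℝ}
    (σ : Equiv.Perm ι) {c : ℝ} (hc : 0 ≤ c) (h : ∀ i, 2 * c ≤ f i + f (σ i)) :
    Fintype.card ι * c ^ 2 ≤ ∑ i, f i ^ 2 := by
  have hpair : ∀ i, 2 * c ^ 2 ≤ f i ^ 2 + f (σ i) ^ 2 := fun i => by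
    nlinarith [h i, sq_nonneg (f i - f (σ i))]
  have hsum := sum_le_sum fun i (_ : i ∈ univ) => hpair i
  rw [sum_add_distrib, Equiv.sum_comp σ (fun i => f i ^ 2), sum_const, card_univ,
    nsmul_eq_mul] at hsum
  linarith

lemma two_pow_mul_norm_base_sq_le_sum_norm_signedSum_sq (x0 : X) (y : Fin m → X) :
    2 ^ m * ‖x0‖ ^ 2 ≤ ∑ ε, ‖signedSum x0 y ε‖ ^ 2 := by
  let σ : Equiv.Perm (Fin m → Bool) :=
    Involutive.toPerm (fun ε j => !ε j) fun ε => by simp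
  have hcard : (Fintype.card (Fin m → Bool) : ℝ) = 2 ^ m := by simp
  rw [← hcard]
  refine card_mul_sq_le_sum_sq_of_le_add_perm σ (norm_nonneg _) fun ε => ?_
  calc 2 * ‖x0‖ = ‖signedSum x0 y ε + signedSum x0 y (σ ε)‖ := by
        rw [show σ ε = fun j => !ε j from rfl, signedSum_add_signedSum_not, norm_smul]
        norm_num
    _ ≤ _ := norm_add_le _ _

lemma two_pow_mul_norm_term_sq_le_sum_norm_signedSum_sq (x0 : X) (y : Fin m → X) (j : Fin m) :
    2 ^ m * ‖y j‖ ^ 2 ≤ ∑ ε, ‖signedSum x0 y ε‖ ^ 2 := by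
  let σ : Equiv.Perm (Fin m → Bool) :=
    Involutive.toPerm (fun ε => update ε j (!ε j)) fun ε => by simp
  have hcard : (Fintype.card (Fin m → Bool) : ℝ) = 2 ^ m := by simp
  rw [← hcard]
  refine card_mul_sq_le_sum_sq_of_le_add_perm σ (norm_nonneg _) fun ε => ?_
  calc 2 * ‖y j‖ = ‖signedSum x0 y ε - signedSum x0 y (σ ε)‖ := by
        rw [show σ ε = update ε j (!ε j) from rfl, signedSum_sub_signedSum_update, norm_smul]
        cases ε j <;> norm_num
    _ ≤ _ := norm_sub_le _ _

lemma inv_succ_le_njRatio (x0 : X) (y : Fin m → X) (hpos : 0 < ‖x0‖ ^ 2 + ∑ j, ‖y j‖ ^ 2) :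
    1 / ((m : ℝ) + 1) ≤ njRatio x0 y := by
  set S := ∑ ε, ‖signedSum x0 y ε‖ ^ 2
  have hS : 2 ^ m * (‖x0‖ ^ 2 + ∑ j, ‖y j‖ ^ 2) ≤ (m + 1) * S :=
    calc 2 ^ m * (‖x0‖ ^ 2 + ∑ j, ‖y j‖ ^ 2)
        = 2 ^ m * ‖x0‖ ^ 2 + ∑ j, 2 ^ m * ‖y j‖ ^ 2 := by rw [mul_add, mul_sum]
      _ ≤ S + ∑ _j : Fin m, S :=
          add_le_add (two_pow_mul_norm_base_sq_le_sum_norm_signedSum_sq x0 y)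
            (sum_le_sum fun j _ => two_pow_mul_norm_term_sq_le_sum_norm_signedSum_sq x0 y j)
      _ = (m + 1) * S := by
          rw [sum_const, card_univ, Fintype.card_fin, nsmul_eq_mul]
          ring
  rw [njRatio_eq_sum_signedSum, div_le_div_iff₀ (by positivity) (by positivity)]
  linarith

lemma njRatio_eq_inv_succ (x0 : X) (y : Fin m → X) (h0 : ‖x0‖ = 1) (hy : ∀ j, ‖y j‖ = 1)
    (hs : ∀ ε, ‖signedSum x0 y ε‖ = 1) : njRatio x0 y = 1 / ((m : ℝ) + 1) := by
  rw [njRatio_eq_sum_signedSum]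
  simp only [hs, h0, hy, one_pow, sum_const, card_univ, Fintype.card_fun, Fintype.card_bool,
    Fintype.card_fin, nsmul_eq_mul, mul_one]
  field_simp
  push_cast
  ring

lemma lowerNJ_succ_eq (x0 : X) (y : Fin m → X) (h0 : ‖x0‖ = 1) (hy : ∀ j, ‖y j‖ = 1)
    (hs : ∀ ε, ‖signedSum x0 y ε‖ = 1) : lowerNJ X (m + 1) = 1 / ((m : ℝ) + 1) := by
  refine IsLeast.csInf_eq ⟨⟨x0, y, ?_, (njRatio_eq_inv_succ x0 y h0 hy hs).symm⟩, ?_⟩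
  · rw [h0]; positivity
  · rintro _ ⟨a, b, hab, rfl⟩
    exact inv_succ_le_njRatio a b hab

lemma lowerMNJ_succ_eq (x0 : X) (y : Fin m → X) (h0 : ‖x0‖ = 1) (hy : ∀ j, ‖y j‖ = 1)
    (hs : ∀ ε, ‖signedSum x0 y ε‖ = 1) : lowerMNJ X (m + 1) = 1 / ((m : ℝ) + 1) := by
  refine IsLeast.csInf_eq ⟨⟨x0, y, h0, hy, (njRatio_eq_inv_succ x0 y h0 hy hs).symm⟩, ?_⟩
  rintro _ ⟨a, b, ha, -, rfl⟩
  exact inv_succ_le_njRatio a b (by rw [ha]; positivity)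

lemma signedSum_eq_sum_cons (e : Fin (m + 1) → X) (ε : Fin m → Bool) :
    signedSum (e 0) (fun j => e j.succ) ε
      = ∑ t, (Fin.cons 1 fun j => if ε j then 1 else -1 : Fin (m + 1) → ℝ) t • e t := by
  simp [signedSum, Fin.sum_univ_succ]

theorem lowerNJ_eq_and_lowerMNJ_eq_of_norm_sum_smul_eq_one (e : Fin (m + 1) → X)
    (he : ∀ t, ‖e t‖ = 1)
    (hsum : ∀ c : Fin (m + 1) → ℝ, (∀ t, |c t| = 1) → ‖∑ t, c t • e t‖ = 1) :
    lowerNJ X (m + 1) = 1 / ((m : ℝ) + 1) ∧ lowerMNJ X (m + 1) = 1 / ((m : ℝ) + 1) := by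
  have hs (ε : Fin m → Bool) : ‖signedSum (e 0) (fun j => e j.succ) ε‖ = 1 := by
    rw [signedSum_eq_sum_cons]
    exact hsum _ (Fin.cases (by simp) fun j => by simp only [Fin.cons_succ]; split_ifs <;> simp)
  exact ⟨lowerNJ_succ_eq _ _ (he 0) (fun _ => he _) hs,
    lowerMNJ_succ_eq _ _ (he 0) (fun _ => he _) hs⟩

end SignedSums

section SupNorm

variable {ι : Type*} [DecidableEq ι] {n : ℕ}

lemma sum_smul_single_apply_of_injective {φ : Fin n → ι} (hφ : Injective φ) (c : Fin n → ℝ)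
    (t : Fin n) :
    (∑ s, c s • Pi.single (φ s) (1 : ℝ)) (φ t) = c t := by
  simp [Finset.sum_apply, Pi.single_apply, hφ.eq_iff]

lemma abs_sum_smul_single_apply_le_one {φ : Fin n → ι} (hφ : Injective φ) {c : Fin n → ℝ}
    (hc : ∀ t, |c t| ≤ 1) (i : ι) : |(∑ s, c s • Pi.single (φ s) (1 : ℝ)) i| ≤ 1 := by
  by_cases hi : ∃ t, φ t = i
  · obtain ⟨t, rfl⟩ := hi
    rw [sum_smul_single_apply_of_injective hφ]
    exact hc t
  · push Not at hi
    simp [Finset.sum_apply, (hi _).symm]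

lemma PiLp.norm_sum_smul_single_eq_one [Fintype ι] {φ : Fin (n + 1) → ι} (hφ : Injective φ)
    {c : Fin (n + 1) → ℝ} (hc : ∀ t, |c t| = 1) :
    ‖∑ s, c s • (PiLp.single ⊤ (φ s) 1 : PiLp ⊤ fun _ : ι => ℝ)‖ = 1 := by
  rw [← PiLp.norm_ofLp]
  simp only [WithLp.ofLp_sum, WithLp.ofLp_smul, PiLp.ofLp_single]
  refine le_antisymm ((pi_norm_le_iff_of_nonneg zero_le_one).2 fun i => ?_) ?_
  · exact abs_sum_smul_single_apply_le_one hφ (fun t => (hc t).le) i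
  · have h := norm_le_pi_norm (∑ s, c s • Pi.single (φ s) 1 : ι → ℝ) (φ 0)
    rwa [sum_smul_single_apply_of_injective hφ, Real.norm_eq_abs, hc 0] at h

lemma lp.norm_sum_smul_single_eq_one {φ : Fin (n + 1) → ι} (hφ : Injective φ)
    {c : Fin (n + 1) → ℝ} (hc : ∀ t, |c t| = 1) :
    ‖∑ s, c s • (lp.single ⊤ (φ s) 1 : lp (fun _ : ι => ℝ) ⊤)‖ = 1 := by
  have hcoe : ⇑(∑ s, c s • (lp.single ⊤ (φ s) 1 : lp (fun _ : ι => ℝ) ⊤))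
      = ∑ s, c s • Pi.single (φ s) (1 : ℝ) := by
    simp only [lp.coeFn_sum, lp.coeFn_smul, lp.coeFn_single]
  refine le_antisymm (lp.norm_le_of_forall_le zero_le_one fun i => ?_) ?_
  · rw [hcoe]
    exact abs_sum_smul_single_apply_le_one hφ (fun t => (hc t).le) i
  · have h := lp.norm_apply_le_norm ENNReal.top_ne_zero
      (∑ s, c s • (lp.single ⊤ (φ s) 1 : lp (fun _ : ι => ℝ) ⊤)) (φ 0)
    rwa [hcoe, sum_smul_single_apply_of_injective hφ, Real.norm_eq_abs, hc 0] at h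

end SupNorm

theorem stmt_11 (n : ℕ) (hn : 2 ≤ n) (k : ℕ) (hk : n ≤ k) :
    lowerNJ (PiLp ⊤ (fun (_ : Fin k) => ℝ)) n = 1 / (n : ℝ) ∧
    lowerMNJ (PiLp ⊤ (fun (_ : Fin k) => ℝ)) n = 1 / (n : ℝ) ∧
    lowerNJ (lp (fun (_ : ℕ) => ℝ) ⊤) n = 1 / (n : ℝ) ∧
    lowerMNJ (lp (fun (_ : ℕ) => ℝ) ⊤) n = 1 / (n : ℝ) := by
  obtain ⟨m, rfl⟩ : ∃ m, n = m + 1 := ⟨n - 1, by omega⟩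
  push_cast
  obtain ⟨hPi, hPi'⟩ := lowerNJ_eq_and_lowerMNJ_eq_of_norm_sum_smul_eq_one
    (fun t => (PiLp.single ⊤ (Fin.castLE hk t) 1 : PiLp ⊤ fun _ : Fin k => ℝ)) (by simp)
    fun _ => PiLp.norm_sum_smul_single_eq_one (Fin.castLE_injective hk)
  obtain ⟨hlp, hlp'⟩ := lowerNJ_eq_and_lowerMNJ_eq_of_norm_sum_smul_eq_one
    (fun t => (lp.single ⊤ (t : ℕ) 1 : lp (fun _ : ℕ => ℝ) ⊤)) (by simp [lp.norm_single])
    fun _ => lp.norm_sum_smul_single_eq_one Fin.val_injective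
  exact ⟨hPi, hPi', hlp, hlp'⟩
end

section
/- Let (Ω, Σ, μ) be a measure space with a nonzero non-atomic σ-finite measure μ, and let n ≥ 2 be an integer. Then C̄_mNJ^{(n)}(L¹(μ)) = C̄_NJ^{(n)}(L¹(μ)) = n, where L¹(μ) is the real Lebesgue space of μ-integrable functions with its usual norm. -/
open Finset MeasureTheory

/-- A measure is non-atomic if every set of positive measure contains a measurable
subset of strictly smaller, yet positive, measure. -/
def NonatomicMeasure {Ω : Type*} [MeasurableSpace Ω] (μ : MeasureTheory.Measure Ω) : Prop :=
  ∀ A : Set Ω, MeasurableSet A → 0 < μ A →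
    ∃ B : Set Ω, B ⊆ A ∧ MeasurableSet B ∧ 0 < μ B ∧ μ B < μ A


section Aux
variable {Ω : Type*} [MeasurableSpace Ω] {μ : Measure Ω}

lemma myCoeFn_sum {ι : Type*} [DecidableEq ι] (s : Finset ι) (f : ι → Lp ℝ 1 μ) :
    ⇑(∑ i ∈ s, f i) =ᵐ[μ] fun x => ∑ i ∈ s, f i x := by
  induction s using Finset.induction with
  | empty =>
    simp only [Finset.sum_empty]
    exact MeasureTheory.Lp.coeFn_zero (E := ℝ) (p := 1) (μ := μ)
  | insert a s hni ih =>
    rw [Finset.sum_insert hni]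
    filter_upwards [MeasureTheory.Lp.coeFn_add _ (∑ i ∈ _, f i), ih] with x h1 h2
    rw [h1, Pi.add_apply, h2, Finset.sum_insert hni]

lemma exists_pos_finite [SigmaFinite μ] (hμ : μ ≠ 0) :
    ∃ A : Set Ω, MeasurableSet A ∧ 0 < μ A ∧ μ A < ⊤ := by
  by_contra h
  push_neg at h
  apply hμ
  have h0 : ∀ i, μ (spanningSets μ i) = 0 := by
    intro i
    by_contra h0
    exact absurd (measure_spanningSets_lt_top μ i)
      (not_lt.2 (h _ (measurableSet_spanningSets μ i) (pos_iff_ne_zero.2 h0)))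
  have : μ Set.univ = 0 := by
    rw [← iUnion_spanningSets μ]
    exact measure_iUnion_null h0
  exact Measure.measure_univ_eq_zero.mp this

lemma exists_disjoint_family (hna : NonatomicMeasure μ) :
    ∀ (k : ℕ) (A : Set Ω), MeasurableSet A → 0 < μ A → μ A < ⊤ →
    ∃ f : Fin k → Set Ω,
      (∀ i, f i ⊆ A ∧ MeasurableSet (f i) ∧ 0 < μ (f i) ∧ μ (f i) < ⊤) ∧
      (∀ i j, i ≠ j → Disjoint (f i) (f j)) := by
  intro k
  induction k with
  | zero => exact fun A _ _ _ => ⟨fun i => i.elim0, fun i => i.elim0, fun i => i.elim0⟩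
  | succ k ih =>
    intro A hA hA0 hAt
    obtain ⟨B, hBA, hB, hB0, hBlt⟩ := hna A hA hA0
    have hBt : μ B < ⊤ := hBlt.trans hAt
    have hdiff : 0 < μ (A \ B) := by
      rw [measure_diff hBA hB.nullMeasurableSet hBt.ne]
      exact tsub_pos_of_lt hBlt
    obtain ⟨g, hg1, hg2⟩ := ih (A \ B) (hA.diff hB) hdiff
      (lt_of_le_of_lt (measure_mono Set.diff_subset) hAt)
    refine ⟨Fin.cons B g, ?_, ?_⟩
    · intro i
      refine Fin.cases ?_ ?_ i
      · exact ⟨hBA, hB, hB0, hBt⟩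
      · intro j
        simp only [Fin.cons_succ]
        exact ⟨((hg1 j).1.trans Set.diff_subset), (hg1 j).2⟩
    · have hBd : ∀ j, Disjoint B (g j) := fun j =>
        (Set.disjoint_sdiff_right.mono_right (hg1 j).1).symm.symm
      intro i j hij
      induction i using Fin.cases with
      | zero =>
        induction j using Fin.cases with
        | zero => exact absurd rfl hij
        | succ j' => simpa using hBd j'
      | succ i' =>
        induction j using Fin.cases with
        | zero => simpa using (hBd i').symm
        | succ j' =>
          simp only [Fin.cons_succ]
          exact hg2 i' j' (fun h => hij (by rw [h]))
end Aux

lemma njRatio_le {X : Type*} [NormedAddCommGroup X] [NormedSpace ℝ X] {m : ℕ}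
    (x0 : X) (y : Fin m → X) (hd : 0 < ‖x0‖ ^ 2 + ∑ j, ‖y j‖ ^ 2) :
    njRatio x0 y ≤ (m + 1 : ℝ) := by
  unfold njRatio
  rw [div_le_iff₀ (by positivity)]
  have key : ∀ ε : Fin m → Bool,
      ‖x0 + ∑ j, (if ε j then (1:ℝ) else -1) • y j‖ ^ 2
        ≤ (m + 1 : ℝ) * (‖x0‖ ^ 2 + ∑ j, ‖y j‖ ^ 2) := by
    intro ε
    have h1 : ‖x0 + ∑ j, (if ε j then (1:ℝ) else -1) • y j‖ ≤ ‖x0‖ + ∑ j, ‖y j‖ := by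
      refine (norm_add_le _ _).trans ?_
      gcongr
      refine (norm_sum_le _ _).trans (Finset.sum_le_sum fun j _ => ?_)
      rw [norm_smul]
      rcases h : ε j <;> simp
    have h2 : (‖x0‖ + ∑ j, ‖y j‖) ^ 2 ≤ (m + 1 : ℝ) * (‖x0‖ ^ 2 + ∑ j, ‖y j‖ ^ 2) := by
      have := sq_sum_le_card_mul_sum_sq (s := (Finset.univ : Finset (Fin (m+1))))
        (f := Fin.cons ‖x0‖ (fun j => ‖y j‖))
      simpa [Fin.sum_univ_succ, add_comm] using this
    calc ‖x0 + ∑ j, (if ε j then (1:ℝ) else -1) • y j‖ ^ 2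
        ≤ (‖x0‖ + ∑ j, ‖y j‖) ^ 2 := by
          apply pow_le_pow_left₀ (norm_nonneg _) h1
      _ ≤ _ := h2
  calc (∑ ε : Fin m → Bool, ‖x0 + ∑ j, (if ε j then (1:ℝ) else -1) • y j‖ ^ 2)
      ≤ ∑ _ε : Fin m → Bool, (m + 1 : ℝ) * (‖x0‖ ^ 2 + ∑ j, ‖y j‖ ^ 2) :=
        Finset.sum_le_sum fun ε _ => key ε
    _ = (m + 1 : ℝ) * (2 ^ m * (‖x0‖ ^ 2 + ∑ j, ‖y j‖ ^ 2)) := by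
        rw [Finset.sum_const, Finset.card_univ]
        simp [Fintype.card_fun, nsmul_eq_mul]
        ring

section Witness
variable {Ω : Type*} [MeasurableSpace Ω] {μ : Measure Ω}

lemma norm_signed_sum (k : ℕ) (A : Fin k → Set Ω)
    (hmeas : ∀ i, MeasurableSet (A i)) (h0 : ∀ i, 0 < μ (A i)) (hfin : ∀ i, μ (A i) < ⊤)
    (hdisj : ∀ i j, i ≠ j → Disjoint (A i) (A j)) (θ : Fin k → ℝ) (hθ : ∀ i, |θ i| = 1) :
    ‖∑ i, θ i • ((μ (A i)).toReal⁻¹ •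
      (indicatorConstLp 1 (hmeas i) (hfin i).ne (1:ℝ) : Lp ℝ 1 μ))‖ = k := by
  set c : Fin k → ℝ := fun i => (μ (A i)).toReal with hc_def
  have hc : ∀ i, 0 < c i := fun i => ENNReal.toReal_pos (h0 i).ne' (hfin i).ne
  set e : Fin k → Lp ℝ 1 μ :=
    fun i => (c i)⁻¹ • (indicatorConstLp 1 (hmeas i) (hfin i).ne (1:ℝ)) with he_def
  have hone : ∀ i : Fin k,
      ∀ᵐ x ∂μ, (θ i • e i) x = (A i).indicator (fun _ => θ i * (c i)⁻¹) x := by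
    intro i
    filter_upwards [Lp.coeFn_smul (θ i) (e i),
      Lp.coeFn_smul ((c i)⁻¹) (indicatorConstLp 1 (hmeas i) (hfin i).ne (1:ℝ)),
      indicatorConstLp_coeFn (p := 1) (hs := hmeas i) (hμs := (hfin i).ne) (c := (1:ℝ))]
      with x h1 h2 h3
    rw [h1, Pi.smul_apply, he_def]
    simp only []
    rw [h2, Pi.smul_apply, h3]
    by_cases hx : x ∈ A i <;>
      simp [Set.indicator_of_mem, Set.indicator_of_notMem, hx]
  have hae : ⇑(∑ i, θ i • e i) =ᵐ[μ]
      fun x => ∑ i, (A i).indicator (fun _ => θ i * (c i)⁻¹) x := by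
    refine (myCoeFn_sum _ _).trans ?_
    filter_upwards [MeasureTheory.ae_all_iff.2 hone] with x hx
    exact Finset.sum_congr rfl fun i _ => hx i
  have hpt : ∀ x, ‖∑ i, (A i).indicator (fun _ => θ i * (c i)⁻¹) x‖
      = ∑ i, (A i).indicator (fun _ => (c i)⁻¹) x := by
    intro x
    by_cases h : ∃ i, x ∈ A i
    · obtain ⟨i0, hi0⟩ := h
      have hnot : ∀ j, j ≠ i0 → x ∉ A j := fun j hj hx =>
        (hdisj j i0 hj).le_bot (Set.mem_inter hx hi0)
      rw [Finset.sum_eq_single i0 (fun j _ hj => Set.indicator_of_notMem (hnot j hj) _)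
        (by simp), Finset.sum_eq_single i0
          (fun j _ hj => Set.indicator_of_notMem (hnot j hj) _) (by simp),
        Set.indicator_of_mem hi0, Set.indicator_of_mem hi0, Real.norm_eq_abs, abs_mul,
        hθ i0, one_mul, abs_of_nonneg (inv_nonneg.2 (hc i0).le)]
    · push_neg at h
      simp [Set.indicator_of_notMem (h _)]
  calc ‖∑ i, θ i • e i‖ = ∫ x, ‖(∑ i, θ i • e i) x‖ ∂μ :=
        L1.norm_eq_integral_norm _
    _ = ∫ x, ∑ i, (A i).indicator (fun _ => (c i)⁻¹) x ∂μ := by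
        refine integral_congr_ae ?_
        filter_upwards [hae] with x hx
        rw [hx, hpt x]
    _ = ∑ i, ∫ x, (A i).indicator (fun _ => (c i)⁻¹) x ∂μ := by
        refine integral_finset_sum _ fun i _ => ?_
        exact (integrableOn_const (hfin i).ne).integrable_indicator (hmeas i)
    _ = ∑ _i : Fin k, (1:ℝ) := by
        refine Finset.sum_congr rfl fun i _ => ?_
        rw [integral_indicator_const _ (hmeas i), smul_eq_mul]
        exact mul_inv_cancel₀ (hc i).ne'
    _ = k := by simp

end Witness

lemma aux_main_stmt12 {Ω : Type*} [MeasurableSpace Ω] (μ : Measure Ω) [SigmaFinite μ]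
    (hμ : μ ≠ 0) (hna : NonatomicMeasure μ) (n : ℕ) (hn : 2 ≤ n) :
    upperMNJ (Lp ℝ 1 μ) n = (n : ℝ) ∧ upperNJ (Lp ℝ 1 μ) n = (n : ℝ) := by
  obtain ⟨m, rfl⟩ : ∃ m, n = m + 1 := ⟨n - 1, by omega⟩
  obtain ⟨A0, hA0m, hA0p, hA0f⟩ := exists_pos_finite hμ
  obtain ⟨A, hA1, hA2⟩ := exists_disjoint_family hna (m + 1) A0 hA0m hA0p hA0f
  have hmeas : ∀ i, MeasurableSet (A i) := fun i => (hA1 i).2.1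
  have h0 : ∀ i, 0 < μ (A i) := fun i => (hA1 i).2.2.1
  have hfin : ∀ i, μ (A i) < ⊤ := fun i => (hA1 i).2.2.2
  set e : Fin (m + 1) → Lp ℝ 1 μ :=
    fun i => (μ (A i)).toReal⁻¹ • indicatorConstLp 1 (hmeas i) (hfin i).ne (1 : ℝ) with he
  have hnorm : ∀ θ : Fin (m + 1) → ℝ, (∀ i, |θ i| = 1) →
      ‖∑ i, θ i • e i‖ = ((m + 1 : ℕ) : ℝ) :=
    fun θ hθ => norm_signed_sum (m + 1) A hmeas h0 hfin hA2 θ hθ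
  have he1 : ∀ i, ‖e i‖ = 1 := by
    intro i
    have hct : 0 < (μ (A i)).toReal := ENNReal.toReal_pos (h0 i).ne' (hfin i).ne
    rw [he]
    simp only []
    rw [norm_smul, norm_indicatorConstLp one_ne_zero ENNReal.one_ne_top]
    simp [Real.norm_eq_abs, abs_of_nonneg hct.le, inv_mul_cancel₀ hct.ne']
    exact inv_mul_cancel₀ hct.ne'
  have hθabs : ∀ (ε : Fin m → Bool) (i : Fin (m + 1)),
      |(Fin.cons 1 (fun j => if ε j then (1 : ℝ) else -1) : Fin (m + 1) → ℝ) i| = 1 := by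
    intro ε i
    induction i using Fin.cases with
    | zero => simp
    | succ j => rcases h : ε j <;> simp [h]
  have hsum : ∀ ε : Fin m → Bool,
      e 0 + ∑ j, (if ε j then (1 : ℝ) else -1) • e j.succ
        = ∑ i, (Fin.cons 1 (fun j => if ε j then (1 : ℝ) else -1) : Fin (m + 1) → ℝ) i • e i := by
    intro ε
    rw [Fin.sum_univ_succ]
    simp
  have hratio : njRatio (e 0) (fun j => e j.succ) = ((m + 1 : ℕ) : ℝ) := by
    unfold njRatio
    have hden : ‖e 0‖ ^ 2 + ∑ j : Fin m, ‖e j.succ‖ ^ 2 = ((m + 1 : ℕ) : ℝ) := by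
      simp [he1]
      push_cast
      ring
    have hnum : ∀ ε : Fin m → Bool,
        ‖e 0 + ∑ j, (if ε j then (1 : ℝ) else -1) • e j.succ‖ = ((m + 1 : ℕ) : ℝ) := by
      intro ε
      rw [hsum ε, hnorm _ (hθabs ε)]
    rw [hden]
    have : (∑ ε : Fin m → Bool,
        ‖e 0 + ∑ j, (if ε j then (1 : ℝ) else -1) • e j.succ‖ ^ 2)
        = (2 : ℝ) ^ m * ((m + 1 : ℕ) : ℝ) ^ 2 := by
      rw [Finset.sum_congr rfl fun ε _ => by rw [hnum ε]]
      rw [Finset.sum_const, Finset.card_univ]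
      simp [Fintype.card_fun, nsmul_eq_mul]
    rw [this]
    have hpos : (0 : ℝ) < ((m + 1 : ℕ) : ℝ) := by positivity
    field_simp
  have hub : ∀ {X : Type} (x0 : Lp ℝ 1 μ) (y : Fin m → Lp ℝ 1 μ),
      0 < ‖x0‖ ^ 2 + ∑ j, ‖y j‖ ^ 2 → njRatio x0 y ≤ ((m + 1 : ℕ) : ℝ) := by
    intro X x0 y h
    exact (njRatio_le x0 y h).trans_eq (by push_cast; ring)
  constructor
  · apply le_antisymm
    · refine csSup_le ⟨((m + 1 : ℕ) : ℝ), e 0, fun j => e j.succ, he1 0, fun j => he1 _,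
        hratio.symm⟩ ?_
      rintro c ⟨x0, y, hx0, hy, rfl⟩
      refine hub (X := ℕ) x0 y ?_
      rw [hx0]
      have h2 : (0:ℝ) ≤ ∑ j : Fin m, ‖y j‖ ^ 2 := Finset.sum_nonneg fun j _ => by positivity
      nlinarith
    · refine le_csSup ⟨((m + 1 : ℕ) : ℝ), ?_⟩
        ⟨e 0, fun j => e j.succ, he1 0, fun j => he1 _, hratio.symm⟩
      rintro c ⟨x0, y, hx0, hy, rfl⟩
      refine hub (X := ℕ) x0 y ?_
      rw [hx0]
      have h2 : (0:ℝ) ≤ ∑ j : Fin m, ‖y j‖ ^ 2 := Finset.sum_nonneg fun j _ => by positivity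
      nlinarith
  · have hd : 0 < ‖e 0‖ ^ 2 + ∑ j : Fin m, ‖(fun j => e j.succ) j‖ ^ 2 := by
      rw [he1 0]
      have : (0:ℝ) ≤ ∑ j : Fin m, ‖e j.succ‖ ^ 2 := Finset.sum_nonneg fun j _ => by positivity
      simp only []
      nlinarith
    apply le_antisymm
    · refine csSup_le ⟨((m + 1 : ℕ) : ℝ), e 0, fun j => e j.succ, hd, hratio.symm⟩ ?_
      rintro c ⟨x0, y, hx0, rfl⟩
      exact hub (X := ℕ) x0 y hx0
    · refine le_csSup ⟨((m + 1 : ℕ) : ℝ), ?_⟩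
        ⟨e 0, fun j => e j.succ, hd, hratio.symm⟩
      rintro c ⟨x0, y, hx0, rfl⟩
      exact hub (X := ℕ) x0 y hx0


theorem stmt_12 {Ω : Type*} [MeasurableSpace Ω] (μ : Measure Ω) [SigmaFinite μ]
    (hμ : μ ≠ 0) (hna : NonatomicMeasure μ) (n : ℕ) (hn : 2 ≤ n) :
    upperMNJ (Lp ℝ 1 μ) n = (n : ℝ) ∧ upperNJ (Lp ℝ 1 μ) n = (n : ℝ) := by
  exact aux_main_stmt12 μ hμ hna n hn
end
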